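/- Let λ ∈ 𝔻 with λ ≠ 0 and let ω ∈ 𝔻 be such that the complex derivative of the function z ↦ B_λ(z) = z·(z−λ)/(1−conj(λ)·z) vanishes at ω. Then the squared Blaschke factor B_ω²(z) = ((z−ω)/(1−conj(ω)·z))² satisfies B_ω²(0) = B_ω²(λ); explicitly, ω² = ((λ−ω)/(1−conj(ω)·λ))². -/

import Mathlib

/-!
At a critical point `ω` of `B_λ` the numerator of `B_λ'` vanishes: `conj(λ) ω² - 2ω + λ = 0`.
Subtracting `ω²` times the conjugate equation factors as
`(λ - 2ω + λ conj(ω) ω) (1 - |ω|²) = 0`, and `|ω| < 1` leaves `λ - ω = ω (1 - conj(ω) λ)`.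
So the Blaschke factor at `ω` maps `λ` to `ω` and `0` to `-ω`, which have the same square.
-/

open Complex

/-- The degree-two Blaschke product `B_λ(z) = z (z - λ) / (1 - conj(λ) z)`. -/
noncomputable def Blam (lam z : ℂ) : ℂ := z * (z - lam) / (1 - (starRingEnd ℂ) lam * z)

noncomputable def blaschkeFactor (a z : ℂ) : ℂ := (z - a) / (1 - (starRingEnd ℂ) a * z)

theorem one_sub_mul_ne_zero_of_norm_lt_one {R : Type*} [NormedRing R] [NormOneClass R]
    {a b : R} (ha : ‖a‖ < 1) (hb : ‖b‖ < 1) : 1 - a * b ≠ 0 := by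
  intro h
  have hab : ‖a * b‖ < 1 :=
    (norm_mul_le a b).trans_lt (mul_lt_one_of_nonneg_of_lt_one_left (norm_nonneg a) ha hb.le)
  rw [← sub_eq_zero.mp h, norm_one] at hab
  exact lt_irrefl 1 hab

theorem one_sub_conj_mul_ne_zero {a b : ℂ} (ha : ‖a‖ < 1) (hb : ‖b‖ < 1) :
    1 - (starRingEnd ℂ) a * b ≠ 0 :=
  one_sub_mul_ne_zero_of_norm_lt_one ((norm_conj a).trans_lt ha) hb

theorem hasDerivAt_Blam {lam z : ℂ} (hz : 1 - (starRingEnd ℂ) lam * z ≠ 0) :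
    HasDerivAt (Blam lam)
      (-((starRingEnd ℂ) lam * z ^ 2 - 2 * z + lam) / (1 - (starRingEnd ℂ) lam * z) ^ 2) z := by
  have hnum : HasDerivAt (fun z : ℂ => z * (z - lam)) (1 * (z - lam) + z * 1) z :=
    (hasDerivAt_id z).mul ((hasDerivAt_id z).sub_const lam)
  have hden : HasDerivAt (fun z : ℂ => 1 - (starRingEnd ℂ) lam * z)
      (-((starRingEnd ℂ) lam * 1)) z :=
    ((hasDerivAt_id z).const_mul _).const_sub 1
  refine (hnum.div hden hz).congr_deriv ?_
  ring

theorem deriv_Blam_eq_zero_iff {lam z : ℂ} (hz : 1 - (starRingEnd ℂ) lam * z ≠ 0) :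
    deriv (Blam lam) z = 0 ↔ (starRingEnd ℂ) lam * z ^ 2 - 2 * z + lam = 0 := by
  rw [(hasDerivAt_Blam hz).deriv, div_eq_zero_iff, neg_eq_zero, or_iff_left (pow_ne_zero 2 hz)]

theorem blaschkeFactor_eq_self_of_conj_mul_sq_sub_two_mul_add_eq_zero {lam ω : ℂ}
    (hlam : ‖lam‖ < 1) (hω : ‖ω‖ < 1)
    (hcrit : (starRingEnd ℂ) lam * ω ^ 2 - 2 * ω + lam = 0) :
    blaschkeFactor ω lam = ω := by
  have hconj :
      lam * (starRingEnd ℂ) ω ^ 2 - 2 * (starRingEnd ℂ) ω + (starRingEnd ℂ) lam = 0 := by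
    simpa [mul_comm, map_ofNat] using congrArg (starRingEnd ℂ) hcrit
  have hfactor :
      (lam - 2 * ω + lam * (starRingEnd ℂ) ω * ω) * (1 - (starRingEnd ℂ) ω * ω) = 0 := by
    linear_combination hcrit - ω ^ 2 * hconj
  have hfixed : lam - ω = ω * (1 - (starRingEnd ℂ) ω * lam) := by
    linear_combination (mul_eq_zero.mp hfactor).resolve_right (one_sub_conj_mul_ne_zero hω hω)
  rw [blaschkeFactor, div_eq_iff (one_sub_conj_mul_ne_zero hω hlam), hfixed]

theorem stmt2_general (lam : ℂ) (hlam : ‖lam‖ < 1)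
    (ω : ℂ) (hω : ‖ω‖ < 1)
    (hderiv : deriv (Blam lam) ω = 0) :
    ω ^ 2 = ((lam - ω) / (1 - (starRingEnd ℂ) ω * lam)) ^ 2 := by
  have hcrit := (deriv_Blam_eq_zero_iff (one_sub_conj_mul_ne_zero hlam hω)).mp hderiv
  exact congrArg (· ^ 2) (blaschkeFactor_eq_self_of_conj_mul_sq_sub_two_mul_add_eq_zero
    hlam hω hcrit).symm

/-- if the complex derivative of `B_λ` vanishes at `ω ∈ 𝔻`, then the squared
Blaschke factor at `ω` takes the same value at `0` and `λ`:
`ω² = ((λ−ω)/(1−conj(ω)λ))²`. -/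
theorem stmt2 (lam : ℂ) (hlam : ‖lam‖ < 1) (hlam0 : lam ≠ 0)
    (ω : ℂ) (hω : ‖ω‖ < 1)
    (hderiv : deriv (Blam lam) ω = 0) :
    ω ^ 2 = ((lam - ω) / (1 - (starRingEnd ℂ) ω * lam)) ^ 2 :=
  stmt2_general lam hlam ω hω hderiv
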